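/- Let P = (E, ρ) be a (q,m)-polymatroid of rank K = ρ(E), and let s be an integer with 0 ≤ s < m. Define W_s(P*) = {d_r(P*) : 1 ≤ r ≤ mn − K, r ≡ s (mod m)} and W̄_t(P) = {n + 1 − d_r(P) : 1 ≤ r ≤ K, r ≡ t (mod m)}. Then W_s(P*) = {1, 2, …, n} \ W̄_{s+^m K}(P), where s +^m K denotes the unique integer in {0, 1, …, m−1} congruent to s + K modulo m. -/

import Mathlib

set_option linter.unusedSectionVars false

open Module Matrix

variable {F : Type*} [Field F] [Fintype F] {n : ℕ}

/-- The orthogonal complement of a subspace of `𝔽_q^n` with respect to the standard dot product. -/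
def perp (X : Submodule F (Fin n → F)) : Submodule F (Fin n → F) where
  carrier := {x | ∀ y ∈ X, dotProduct x y = 0}
  add_mem' := fun {a b} ha hb y hy => by
    rw [Set.mem_setOf_eq] at *
    rw [add_dotProduct, ha y hy, hb y hy, add_zero]
  zero_mem' := fun y hy => zero_dotProduct y
  smul_mem' := fun c a ha y hy => by
    rw [Set.mem_setOf_eq] at *
    rw [smul_dotProduct, ha y hy, smul_zero]

/-- The dual rank function `ρ*(X) = ρ(X^⊥) + m·dim X − ρ(E)`. -/
noncomputable def dualRho (m : ℕ) (rho : Submodule F (Fin n → F) → ℤ) (X : Submodule F (Fin n → F)) : ℤ :=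
  rho (perp X) + (m : ℤ) * (finrank F X : ℤ) - rho ⊤

/-- The nullity function `ν(X) = m·dim X − ρ(X)`. -/
noncomputable def nullity (m : ℕ) (rho : Submodule F (Fin n → F) → ℤ) (X : Submodule F (Fin n → F)) : ℤ :=
  (m : ℤ) * (finrank F X : ℤ) - rho X

/-- The conullity function `ν*(X) = ρ(E) − ρ(X^⊥)`. -/
def coNull (rho : Submodule F (Fin n → F) → ℤ) (X : Submodule F (Fin n → F)) : ℤ :=
  rho ⊤ - rho (perp X)

/-- The `r`-th generalized weight `d_r = min{dim X : ν*(X) ≥ r}`. -/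
noncomputable def genW (rho : Submodule F (Fin n → F) → ℤ) (r : ℤ) : ℕ :=
  sInf {d : ℕ | ∃ X : Submodule F (Fin n → F), finrank F X = d ∧ r ≤ coNull rho X}

/-- `h(x) = max{ν(X) : dim X = x}`. -/
noncomputable def hFun (m : ℕ) (rho : Submodule F (Fin n → F) → ℤ) (x : ℕ) : ℤ :=
  sSup {v : ℤ | ∃ X : Submodule F (Fin n → F), finrank F X = x ∧ v = nullity m rho X}

/-- `h*(x) = max{ν*(X) : dim X = x}`. -/
noncomputable def hStar (rho : Submodule F (Fin n → F) → ℤ) (x : ℕ) : ℤ :=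
  sSup {v : ℤ | ∃ X : Submodule F (Fin n → F), finrank F X = x ∧ v = coNull rho X}

/-- A `(q,m)`-polymatroid on `E = 𝔽_q^n`. -/
structure QMPolymatroid (F : Type*) [Field F] [Fintype F] (n m : ℕ) where
  rho : Submodule F (Fin n → F) → ℤ
  rho_nonneg : ∀ X, 0 ≤ rho X
  rho_le : ∀ X, rho X ≤ (m : ℤ) * (finrank F X : ℤ)
  rho_mono : ∀ ⦃X Y⦄, X ≤ Y → rho X ≤ rho Y
  rho_submodular : ∀ X Y, rho (X ⊔ Y) + rho (X ⊓ Y) ≤ rho X + rho Y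

/-- A `(q,m)`-demi-polymatroid on `E = 𝔽_q^n`. -/
structure QMDemiPolymatroid (F : Type*) [Field F] [Fintype F] (n m : ℕ) where
  rho : Submodule F (Fin n → F) → ℤ
  rho_nonneg : ∀ X, 0 ≤ rho X
  rho_le : ∀ X, rho X ≤ (m : ℤ) * (finrank F X : ℤ)
  rho_mono : ∀ ⦃X Y⦄, X ≤ Y → rho X ≤ rho Y
  dual_nonneg : ∀ X, 0 ≤ dualRho m rho X
  dual_le : ∀ X, dualRho m rho X ≤ (m : ℤ) * (finrank F X : ℤ)
  dual_mono : ∀ ⦃X Y⦄, X ≤ Y → dualRho m rho X ≤ dualRho m rho Y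

section Codes

variable {m : ℕ}

/-- The row space of a matrix. -/
def rowSpace (A : Matrix (Fin m) (Fin n) F) : Submodule F (Fin n → F) :=
  Submodule.span F (Set.range A)

theorem rowSpace_le_iff (A : Matrix (Fin m) (Fin n) F) (X : Submodule F (Fin n → F)) :
    rowSpace A ≤ X ↔ ∀ i, A i ∈ X := by
  rw [rowSpace, Submodule.span_le]; exact Set.range_subset_iff

/-- Matrices whose row space is contained in `X`. -/
def supportedOn (m : ℕ) (X : Submodule F (Fin n → F)) :
    Submodule F (Matrix (Fin m) (Fin n) F) where
  carrier := {A | rowSpace A ≤ X}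
  add_mem' := fun {A B} hA hB => by
    rw [Set.mem_setOf_eq, rowSpace_le_iff] at *
    exact fun i => X.add_mem (hA i) (hB i)
  zero_mem' := by
    rw [Set.mem_setOf_eq, rowSpace_le_iff]
    exact fun i => X.zero_mem
  smul_mem' := fun c A hA => by
    rw [Set.mem_setOf_eq, rowSpace_le_iff] at *
    exact fun i => X.smul_mem c (hA i)

/-- `C(X)`: the subspace of a Delsarte code `C` of matrices whose row space lies in `X`. -/
def subcode (C : Submodule F (Matrix (Fin m) (Fin n) F)) (X : Submodule F (Fin n → F)) :
    Submodule F (Matrix (Fin m) (Fin n) F) :=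
  C ⊓ supportedOn m X

/-- The rank function `ρ_C(X) = dim C − dim C(X^⊥)` of a Delsarte code. -/
noncomputable def rhoC (C : Submodule F (Matrix (Fin m) (Fin n) F))
    (X : Submodule F (Fin n → F)) : ℤ :=
  (finrank F C : ℤ) - (finrank F (subcode C (perp X)) : ℤ)

/-- The generalized weight `d_r(C) = min{dim X : dim C(X) ≥ r}` of a Delsarte code. -/
noncomputable def codeWeight (C : Submodule F (Matrix (Fin m) (Fin n) F)) (r : ℤ) : ℕ :=
  sInf {d : ℕ | ∃ X : Submodule F (Fin n → F),
    finrank F X = d ∧ r ≤ (finrank F (subcode C X) : ℤ)}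

/-- The trace dual of a Delsarte code. -/
def traceDual (C : Submodule F (Matrix (Fin m) (Fin n) F)) :
    Submodule F (Matrix (Fin m) (Fin n) F) where
  carrier := {N | ∀ M ∈ C, Matrix.trace (M * Nᵀ) = 0}
  add_mem' := fun {N₁ N₂} h1 h2 M hM => by
    rw [Matrix.transpose_add, Matrix.mul_add, Matrix.trace_add, h1 M hM, h2 M hM, add_zero]
  zero_mem' := fun M hM => by simp
  smul_mem' := fun c N hN M hM => by
    rw [Matrix.transpose_smul, Matrix.mul_smul, Matrix.trace_smul, hN M hM, smul_zero]

/-- The transposed code `Cᵀ = {Mᵗ : M ∈ C}` of a code of square matrices. -/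
def transposeCode (C : Submodule F (Matrix (Fin n) (Fin n) F)) :
    Submodule F (Matrix (Fin n) (Fin n) F) where
  carrier := {A | Aᵀ ∈ C}
  add_mem' := fun {A B} hA hB => by
    rw [Set.mem_setOf_eq, Matrix.transpose_add]; exact C.add_mem hA hB
  zero_mem' := by
    rw [Set.mem_setOf_eq, Matrix.transpose_zero]; exact C.zero_mem
  smul_mem' := fun c A hA => by
    rw [Set.mem_setOf_eq, Matrix.transpose_smul]; exact C.smul_mem c hA

/-- The maximum rank of a matrix in a subspace of matrices. -/
noncomputable def maxrank (A : Submodule F (Matrix (Fin m) (Fin n) F)) : ℕ :=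
  sSup {r : ℕ | ∃ M ∈ A, M.rank = r}

/-- An optimal anticode: a subspace `𝒜` of `𝕄` with `dim 𝒜 = m · maxrank 𝒜`. -/
def IsOptimalAnticode (A : Submodule F (Matrix (Fin m) (Fin n) F)) : Prop :=
  finrank F A = m * maxrank A

/-- Ravagnani's generalized weight `a_r(C)`. -/
noncomputable def aWeight (C : Submodule F (Matrix (Fin m) (Fin n) F)) (r : ℤ) : ℕ :=
  (sInf {d : ℕ | ∃ A : Submodule F (Matrix (Fin m) (Fin n) F),
    IsOptimalAnticode A ∧ finrank F A = d ∧ r ≤ (finrank F (A ⊓ C : Submodule F _) : ℤ)}) / m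

end Codes

/-!
Let `h(x)` and `h*(x)` be the largest nullity and conullity of `P` on `x`-dimensional subspaces.
Since `X ↦ X^⊥` exchanges dimensions `x` and `n - x` and `ν(X) = ν*(X^⊥) + mx - K`, we get
`h(x) = h*(n - x) + mx - K`. Both `ν` (by submodularity) and `ν*` are monotone, so
`d_r(P*) = x` exactly when `h(x - 1) < r ≤ h(x)`, and `n + 1 - d_r(P) = x` exactly when
`h*(n - x) < r ≤ h*(n + 1 - x)`. Shifting by `mx - K` turns the first interval into `(b - m, a]`,
where `a = h*(n - x)` and `b = h*(n + 1 - x)`. As `(b - m, b]` contains exactly one integer of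
each residue class, `(b - m, a]` meets the class of `s + K` exactly when `(a, b]` misses it.
-/

open Submodule

theorem Int.exists_modEq_Ioc_shift_iff {m c d t lo hi lo' hi' : ℤ} (hcd : c + t ≡ d [ZMOD m])
    (hlo : lo + t = lo') (hhi : hi + t = hi') :
    (∃ r, r ≡ c [ZMOD m] ∧ lo < r ∧ r ≤ hi) ↔ ∃ u, u ≡ d [ZMOD m] ∧ lo' < u ∧ u ≤ hi' := by
  constructor
  · rintro ⟨r, hr, hlor, hrhi⟩
    exact ⟨r + t, (hr.add_right t).trans hcd, by omega, by omega⟩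
  · rintro ⟨u, hu, hlou, huhi⟩
    refine ⟨u - t, Int.ModEq.add_right_cancel' t ?_, by omega, by omega⟩
    rw [sub_add_cancel]
    exact hu.trans hcd.symm

theorem Int.exists_modEq_Ioc_iff_not_exists {m a b d : ℤ} (hm : 0 < m) :
    (∃ u, u ≡ d [ZMOD m] ∧ b - m < u ∧ u ≤ a) ↔ ¬ ∃ r, r ≡ d [ZMOD m] ∧ a < r ∧ r ≤ b := by
  constructor
  · rintro ⟨u, hu, hbu, hua⟩ ⟨r, hr, har, hrb⟩
    have := Int.le_of_dvd (by omega) (hu.trans hr.symm).dvd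
    omega
  · intro hnone
    -- the representative of `d` in `(b - m, b]`
    set u := d + m * ((b - d) / m)
    have hu : u ≡ d [ZMOD m] := Int.add_mul_emod_self_left d m _
    have hub : m * ((b - d) / m) ≤ b - d := Int.mul_ediv_self_le hm.ne'
    have hbu : b - d < m * ((b - d) / m) + m := Int.lt_mul_ediv_self_add hm
    refine ⟨u, hu, by omega, ?_⟩
    by_contra! hau
    exact hnone ⟨u, hu, hau, by omega⟩

section MaxOnDim

variable {K V : Type*} [Field K] [AddCommGroup V] [Module K V]

noncomputable def maxOnDim (f : Submodule K V → ℤ) (d : ℕ) : ℤ :=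
  sSup {v | ∃ X : Submodule K V, finrank K X = d ∧ v = f X}

noncomputable def minDimOf (f : Submodule K V → ℤ) (r : ℤ) : ℕ :=
  sInf {d | ∃ X : Submodule K V, finrank K X = d ∧ r ≤ f X}

variable [FiniteDimensional K V] {f : Submodule K V → ℤ}

theorem Submodule.exists_le_finrank_eq (X : Submodule K V) {d : ℕ} (hXd : finrank K X ≤ d)
    (hd : d ≤ finrank K V) : ∃ Y, X ≤ Y ∧ finrank K Y = d := by
  induction d, hXd using Nat.le_induction with
  | base => exact ⟨X, le_rfl, rfl⟩
  | succ d hXd ih =>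
    obtain ⟨Y, hXY, hY⟩ := ih (by omega)
    obtain ⟨v, hv⟩ := SetLike.exists_not_mem_of_ne_top Y fun h => by
      rw [h, finrank_top] at hY
      omega
    exact ⟨Y ⊔ K ∙ v, hXY.trans le_sup_left, by rw [finrank_sup_span_singleton hv, hY]⟩

theorem minDimOf_mem_Icc (hbot : f ⊥ = 0) {r : ℤ} (hr : 1 ≤ r) (hrtop : r ≤ f ⊤) :
    minDimOf f r ∈ Set.Icc 1 (finrank K V) := by
  have htop : finrank K V ∈ {d | ∃ X : Submodule K V, finrank K X = d ∧ r ≤ f X} :=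
    ⟨⊤, finrank_top K V, hrtop⟩
  refine ⟨Nat.one_le_iff_ne_zero.mpr fun h0 => ?_, Nat.sInf_le htop⟩
  obtain ⟨X, hX, hrX⟩ := Nat.sInf_mem (Set.nonempty_of_mem htop)
  rw [← minDimOf, h0, finrank_eq_zero] at hX
  rw [hX, hbot] at hrX
  omega

variable [Finite K]

instance Submodule.finite_of_finite_field : Finite (Submodule K V) :=
  have := Module.finite_of_finite K (M := V)
  Finite.of_injective _ SetLike.coe_injective

theorem finite_values_of_finrank_eq (f : Submodule K V → ℤ) (d : ℕ) :
    {v | ∃ X : Submodule K V, finrank K X = d ∧ v = f X}.Finite :=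
  (Set.finite_range f).subset fun _ ⟨X, _, hv⟩ => ⟨X, hv.symm⟩

theorem le_maxOnDim (f : Submodule K V → ℤ) (X : Submodule K V) :
    f X ≤ maxOnDim f (finrank K X) :=
  le_csSup (finite_values_of_finrank_eq f _).bddAbove ⟨X, rfl, rfl⟩

theorem exists_eq_maxOnDim (f : Submodule K V → ℤ) {d : ℕ} (hd : d ≤ finrank K V) :
    ∃ X : Submodule K V, finrank K X = d ∧ f X = maxOnDim f d := by
  obtain ⟨X, -, hX⟩ := (⊥ : Submodule K V).exists_le_finrank_eq (by simp) hd
  have hne : {v | ∃ X : Submodule K V, finrank K X = d ∧ v = f X}.Nonempty := ⟨f X, X, hX, rfl⟩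
  obtain ⟨Y, hY, hfY⟩ := hne.csSup_mem (finite_values_of_finrank_eq f d)
  exact ⟨Y, hY, hfY.symm⟩

theorem maxOnDim_le_maxOnDim (hf : Monotone f) {d e : ℕ} (hde : d ≤ e) (he : e ≤ finrank K V) :
    maxOnDim f d ≤ maxOnDim f e := by
  obtain ⟨X, hX, hfX⟩ := exists_eq_maxOnDim f (hde.trans he)
  obtain ⟨Y, hXY, hY⟩ := X.exists_le_finrank_eq (hX ▸ hde) he
  calc maxOnDim f d = f X := hfX.symm
    _ ≤ f Y := hf hXY
    _ ≤ maxOnDim f e := hY ▸ le_maxOnDim f Y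

theorem minDimOf_eq_iff (hf : Monotone f) {r : ℤ} {d : ℕ} (hd : d ∈ Set.Icc 1 (finrank K V)) :
    minDimOf f r = d ↔ maxOnDim f (d - 1) < r ∧ r ≤ maxOnDim f d := by
  obtain ⟨hd1, hdV⟩ := hd
  constructor
  · intro hmin
    have hne : {e | ∃ X : Submodule K V, finrank K X = e ∧ r ≤ f X}.Nonempty := by
      by_contra hempty
      rw [Set.not_nonempty_iff_eq_empty] at hempty
      rw [minDimOf, hempty, Nat.sInf_empty] at hmin
      omega
    obtain ⟨X, hX, hrX⟩ := Nat.sInf_mem hne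
    rw [← minDimOf, hmin] at hX
    obtain ⟨X', hX', hfX'⟩ := exists_eq_maxOnDim f (d := d - 1) (by omega)
    refine ⟨?_, hrX.trans (hX ▸ le_maxOnDim f X)⟩
    by_contra! hle
    have hmem : d - 1 ∈ {e | ∃ X : Submodule K V, finrank K X = e ∧ r ≤ f X} :=
      ⟨X', hX', hfX' ▸ hle⟩
    exact Nat.notMem_of_lt_sInf (by rw [← minDimOf, hmin]; omega) hmem
  · rintro ⟨hlt, hle⟩
    obtain ⟨X, hX, hfX⟩ := exists_eq_maxOnDim f hdV
    have hmem : d ∈ {e | ∃ X : Submodule K V, finrank K X = e ∧ r ≤ f X} := ⟨X, hX, hfX ▸ hle⟩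
    refine le_antisymm (Nat.sInf_le hmem) (le_csInf ⟨d, hmem⟩ ?_)
    rintro e ⟨Y, rfl, hrY⟩
    by_contra! hYd
    have := maxOnDim_le_maxOnDim hf (show finrank K Y ≤ d - 1 by omega) (by omega)
    linarith [le_maxOnDim f Y]

theorem exists_minDimOf_eq_iff (hf : Monotone f) (hbot : f ⊥ = 0) (p : ℤ → Prop) (d : ℕ) :
    (∃ r, 1 ≤ r ∧ r ≤ f ⊤ ∧ p r ∧ d = minDimOf f r) ↔
      d ∈ Set.Icc 1 (finrank K V) ∧ ∃ r, p r ∧ maxOnDim f (d - 1) < r ∧ r ≤ maxOnDim f d := by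
  constructor
  · rintro ⟨r, hr, hrtop, hp, rfl⟩
    have hd := minDimOf_mem_Icc hbot hr hrtop
    exact ⟨hd, r, hp, (minDimOf_eq_iff hf hd).mp rfl⟩
  · rintro ⟨hd, r, hp, hlt, hle⟩
    have hbot_le : f ⊥ ≤ maxOnDim f (d - 1) :=
      (le_maxOnDim f ⊥).trans (maxOnDim_le_maxOnDim hf (by simp) ((Nat.sub_le d 1).trans hd.2))
    obtain ⟨X, hX, hfX⟩ := exists_eq_maxOnDim f hd.2
    have hle_top : maxOnDim f d ≤ f ⊤ := hfX ▸ hf le_top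
    exact ⟨r, by omega, by omega, hp, ((minDimOf_eq_iff hf hd).mpr ⟨hlt, hle⟩).symm⟩

end MaxOnDim

section Perp

theorem perp_eq_comap_dualAnnihilator (X : Submodule F (Fin n → F)) :
    perp X = X.dualAnnihilator.comap (dotProductEquiv F (Fin n)).toLinearMap := by
  ext x
  simp [perp, Submodule.mem_dualAnnihilator]

theorem finrank_add_finrank_perp (X : Submodule F (Fin n → F)) :
    finrank F X + finrank F (perp X) = n := by
  rw [perp_eq_comap_dualAnnihilator, comap_equiv_eq_map_symm,
    LinearEquiv.finrank_map_eq, Subspace.finrank_add_finrank_dualAnnihilator_eq, finrank_fin_fun]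

theorem perp_antitone : Antitone (perp (F := F) (n := n)) :=
  fun _ _ hXY _ hx y hy => hx y (hXY hy)

theorem le_perp_perp (X : Submodule F (Fin n → F)) : X ≤ perp (perp X) :=
  fun y hy x hx => by rw [dotProduct_comm]; exact hx y hy

theorem perp_perp (X : Submodule F (Fin n → F)) : perp (perp X) = X :=
  (eq_of_le_of_finrank_eq (le_perp_perp X)
    (by linarith [finrank_add_finrank_perp X, finrank_add_finrank_perp (perp X)])).symm

theorem perp_bot : perp (⊥ : Submodule F (Fin n → F)) = ⊤ :=
  eq_top_of_finrank_eq <| by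
    simpa [finrank_fin_fun] using finrank_add_finrank_perp (⊥ : Submodule F (Fin n → F))

theorem perp_top : perp (⊤ : Submodule F (Fin n → F)) = ⊥ :=
  finrank_eq_zero.mp <| by
    simpa [finrank_fin_fun] using finrank_add_finrank_perp (⊤ : Submodule F (Fin n → F))

end Perp

theorem hFun_eq_maxOnDim (m : ℕ) (rho : Submodule F (Fin n → F) → ℤ) :
    hFun m rho = maxOnDim (nullity m rho) := rfl

theorem hStar_eq_maxOnDim (rho : Submodule F (Fin n → F) → ℤ) :
    hStar rho = maxOnDim (coNull rho) := rfl

theorem genW_eq_minDimOf (rho : Submodule F (Fin n → F) → ℤ) :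
    genW rho = minDimOf (coNull rho) := rfl

theorem nullity_eq_coNull_perp (m : ℕ) (rho : Submodule F (Fin n → F) → ℤ)
    (X : Submodule F (Fin n → F)) :
    nullity m rho X = coNull rho (perp X) + m * finrank F X - rho ⊤ := by
  rw [nullity, coNull, perp_perp]
  ring

namespace QMPolymatroid

variable {m : ℕ} (P : QMPolymatroid F n m)

theorem rho_bot : P.rho ⊥ = 0 :=
  le_antisymm (by simpa using P.rho_le ⊥) (P.rho_nonneg ⊥)

-- Submodularity against a complement `Z` of `X` in `Y` gives `ρ Y ≤ ρ X + ρ Z ≤ ρ X + m dim Z`.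
theorem nullity_mono : Monotone (nullity m P.rho) := by
  intro X Y hXY
  obtain ⟨Z', hZ'⟩ := X.exists_isCompl
  have hsup : X ⊔ Z' ⊓ Y = Y := by
    rw [← sup_inf_assoc_of_le _ hXY, hZ'.sup_eq_top, top_inf_eq]
  have hinf : X ⊓ (Z' ⊓ Y) = ⊥ :=
    eq_bot_iff.mpr ((inf_le_inf_left X inf_le_left).trans hZ'.inf_eq_bot.le)
  have hdim := finrank_sup_add_finrank_inf_eq X (Z' ⊓ Y)
  rw [hsup, hinf, finrank_bot] at hdim
  have hsub := P.rho_submodular X (Z' ⊓ Y)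
  rw [hsup, hinf, P.rho_bot] at hsub
  have hZ := P.rho_le (Z' ⊓ Y)
  have hdimZ : (finrank F Y : ℤ) = finrank F X + finrank F (Z' ⊓ Y : Submodule F _) := by
    exact_mod_cast hdim
  rw [nullity, nullity, hdimZ]
  linarith

theorem coNull_mono : Monotone (coNull P.rho) :=
  fun _ _ hXY => sub_le_sub_left (P.rho_mono (perp_antitone hXY)) _

theorem nullity_bot : nullity m P.rho ⊥ = 0 := by
  simp [nullity, P.rho_bot]

theorem coNull_bot : coNull P.rho ⊥ = 0 := by
  simp [coNull, perp_bot]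

theorem nullity_top : nullity m P.rho ⊤ = m * n - P.rho ⊤ := by
  simp [nullity]

theorem coNull_top : coNull P.rho ⊤ = P.rho ⊤ := by
  simp [coNull, perp_top, P.rho_bot]

theorem coNull_dualRho : coNull (dualRho m P.rho) = nullity m P.rho := by
  funext X
  have hdim : (finrank F X : ℤ) + finrank F (perp X) = n := by
    exact_mod_cast finrank_add_finrank_perp X
  simp only [coNull, dualRho, nullity, perp_top, perp_perp, P.rho_bot, finrank_top,
    finrank_fin_fun]
  linear_combination -(m : ℤ) * hdim

theorem hFun_eq_hStar {x : ℕ} (hx : x ≤ n) :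
    hFun m P.rho x = hStar P.rho (n - x) + m * x - P.rho ⊤ := by
  have hn : finrank F (Fin n → F) = n := finrank_fin_fun F
  rw [hFun_eq_maxOnDim, hStar_eq_maxOnDim]
  apply le_antisymm
  · obtain ⟨X, hX, hmax⟩ := exists_eq_maxOnDim (nullity m P.rho) (hn ▸ hx)
    have hperp := le_maxOnDim (coNull P.rho) (perp X)
    rw [show finrank F (perp X) = n - x by have := finrank_add_finrank_perp X; omega] at hperp
    rw [← hmax, nullity_eq_coNull_perp, hX]
    linarith
  · obtain ⟨Y, hY, hmax⟩ := exists_eq_maxOnDim (coNull P.rho) (d := n - x) (by omega)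
    have hperp := le_maxOnDim (nullity m P.rho) (perp Y)
    have hdim : finrank F (perp Y) = x := by have := finrank_add_finrank_perp Y; omega
    rw [nullity_eq_coNull_perp, perp_perp, hdim] at hperp
    rw [← hmax]
    linarith

theorem exists_genW_dualRho_eq_iff (p : ℤ → Prop) (x : ℕ) :
    (∃ r, 1 ≤ r ∧ r ≤ m * n - P.rho ⊤ ∧ p r ∧ x = genW (dualRho m P.rho) r) ↔
      x ∈ Set.Icc 1 n ∧ ∃ r, p r ∧ hFun m P.rho (x - 1) < r ∧ r ≤ hFun m P.rho x := by
  have key := exists_minDimOf_eq_iff P.nullity_mono P.nullity_bot p x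
  rw [finrank_fin_fun, P.nullity_top] at key
  rwa [genW_eq_minDimOf, P.coNull_dualRho, hFun_eq_maxOnDim]

theorem exists_rev_genW_eq_iff (p : ℤ → Prop) (x : ℕ) :
    (∃ r, 1 ≤ r ∧ r ≤ P.rho ⊤ ∧ p r ∧ x = n + 1 - genW P.rho r) ↔
      x ∈ Set.Icc 1 n ∧ ∃ r, p r ∧ hStar P.rho (n - x) < r ∧ r ≤ hStar P.rho (n + 1 - x) := by
  have key := exists_minDimOf_eq_iff P.coNull_mono P.coNull_bot p (n + 1 - x)
  have hx : n + 1 - x ∈ Set.Icc 1 n ↔ x ∈ Set.Icc 1 n := by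
    simp only [Set.mem_Icc]
    omega
  rw [finrank_fin_fun, P.coNull_top, show n + 1 - x - 1 = n - x by omega, hx,
    ← hStar_eq_maxOnDim] at key
  rw [← key, genW_eq_minDimOf]
  refine exists_congr fun r => and_congr_right fun hr => and_congr_right fun hrtop =>
    and_congr_right fun _ => ?_
  have hy := minDimOf_mem_Icc P.coNull_bot hr (P.coNull_top ▸ hrtop)
  rw [finrank_fin_fun, Set.mem_Icc] at hy
  omega

end QMPolymatroid

/-- `W_s(P*) = {1, …, n} \ W̄_{s +^m K}(P)`. -/
theorem wei_duality_sets {F : Type*} [Field F] [Fintype F] {n m : ℕ}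
    (P : QMPolymatroid F n m) (s : ℤ) (hs0 : 0 ≤ s) (hsm : s < (m : ℤ)) :
    {d : ℕ | ∃ r : ℤ, 1 ≤ r ∧ r ≤ (m : ℤ) * (n : ℤ) - P.rho ⊤ ∧
        r ≡ s [ZMOD (m : ℤ)] ∧ d = genW (dualRho m P.rho) r}
      = Set.Icc 1 n \
        {d : ℕ | ∃ r : ℤ, 1 ≤ r ∧ r ≤ P.rho ⊤ ∧
          r ≡ (s + P.rho ⊤) % (m : ℤ) [ZMOD (m : ℤ)] ∧ d = n + 1 - genW P.rho r} := by
  have hm : (0 : ℤ) < m := by omega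
  ext x
  simp only [Set.mem_ofPred_eq, Set.mem_sdiff, P.exists_genW_dualRho_eq_iff,
    P.exists_rev_genW_eq_iff]
  refine and_congr_right fun hx => ?_
  rw [and_iff_right hx]
  obtain ⟨hx1, hxn⟩ := Set.mem_Icc.mp hx
  have hA := P.hFun_eq_hStar hxn
  have hB := P.hFun_eq_hStar (x := x - 1) (by omega)
  rw [show n - (x - 1) = n + 1 - x by omega, Nat.cast_sub hx1, Nat.cast_one] at hB
  have hcong : s + (P.rho ⊤ - m * x) ≡ (s + P.rho ⊤) % m [ZMOD m] :=
    (Int.modEq_iff_dvd.mpr ⟨x, by ring⟩).trans (Int.mod_modEq _ _).symm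
  exact (Int.exists_modEq_Ioc_shift_iff hcong (by rw [hB]; ring) (by rw [hA]; ring)).trans
    (Int.exists_modEq_Ioc_iff_not_exists hm)
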